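/- Monotonicity of the waiting time in the number of servers for a single-server-pool queue: in a G/G/c queue with fixed arrival and service sequences, under the explicit recursion W_k = max(0, min over servers of their free times − arrival time of customer k), adding a server cannot increase the time at which any of the first c+1 customers begins service. -/
import Mathlib


/-- The earliest free time among the `c` servers. -/
noncomputable def minFree (c : ℕ) (f : ℕ → ℝ) : ℝ :=
  if hc : (Finset.range c).Nonempty then (Finset.range c).inf' hc f else 0

/-- The (least-indexed) server attaining the earliest free time. -/
noncomputable def chosenServer (c : ℕ) (f : ℕ → ℝ) : ℕ :=
  if hc : ((Finset.range c).filter fun i => f i = minFree c f).Nonempty then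
    ((Finset.range c).filter fun i => f i = minFree c f).min' hc
  else 0

/-- `freeTimes c a s n i` is the time at which server `i` (among `c` servers, all
initially free at time `0`) becomes free after the first `n` customers, with
arrival times `a` and service durations `s`, have been assigned: each customer is
assigned to the earliest-free server and begins service at the maximum of its
arrival time and that server's free time. -/
noncomputable def freeTimes (c : ℕ) (a s : ℕ → ℝ) : ℕ → ℕ → ℝ
  | 0 => fun _ => 0
  | n + 1 => fun i =>
      let f := freeTimes c a s n
      if i = chosenServer c f then max (a n) (minFree c f) + s n else f i

/-- Start-of-service time of customer `n`: the maximum of its arrival time and the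
earliest time a server becomes free (`W_n = max (0, min free − a_n)`). -/
noncomputable def startTime (c : ℕ) (a s : ℕ → ℝ) (n : ℕ) : ℝ :=
  max (a n) (minFree c (freeTimes c a s n))

lemma minFree_nonneg (c : ℕ) (f : ℕ → ℝ) (hf : ∀ i, 0 ≤ f i) : 0 ≤ minFree c f := by
  unfold minFree
  split
  · exact Finset.le_inf' _ _ (fun i _ => hf i)
  · exact le_refl 0

lemma minFree_le (c : ℕ) (f : ℕ → ℝ) (i : ℕ) (hi : i ∈ Finset.range c) :
    minFree c f ≤ f i := by
  unfold minFree
  rw [dif_pos ⟨i, hi⟩]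
  exact Finset.inf'_le _ hi

lemma freeTimes_nonneg (c : ℕ) (a s : ℕ → ℝ)
    (ha0 : ∀ k, 0 ≤ a k) (hs : ∀ k, 0 ≤ s k) :
    ∀ n i, 0 ≤ freeTimes c a s n i := by
  intro n
  induction n with
  | zero => intro i; simp [freeTimes]
  | succ n ih =>
    intro i
    show 0 ≤ (let f := freeTimes c a s n;
      if i = chosenServer c f then max (a n) (minFree c f) + s n else f i)
    simp only []
    split
    · have h1 : 0 ≤ max (a n) (minFree c (freeTimes c a s n)) :=
        le_trans (ha0 n) (le_max_left _ _)
      linarith [hs n]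
    · exact ih i

lemma card_used_le (c : ℕ) (a s : ℕ → ℝ) :
    ∀ n, ((Finset.range c).filter fun i => freeTimes c a s n i ≠ 0).card ≤ n := by
  intro n
  induction n with
  | zero => simp [freeTimes]
  | succ n ih =>
    have hsub : ((Finset.range c).filter fun i => freeTimes c a s (n+1) i ≠ 0) ⊆
        insert (chosenServer c (freeTimes c a s n))
          ((Finset.range c).filter fun i => freeTimes c a s n i ≠ 0) := by
      intro i hi
      rw [Finset.mem_filter] at hi
      obtain ⟨hir, hine⟩ := hi
      by_cases hch : i = chosenServer c (freeTimes c a s n)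
      · rw [hch]; exact Finset.mem_insert_self _ _
      · apply Finset.mem_insert_of_mem
        rw [Finset.mem_filter]
        refine ⟨hir, ?_⟩
        have : freeTimes c a s (n+1) i = freeTimes c a s n i := by
          show (let f := freeTimes c a s n;
            if i = chosenServer c f then max (a n) (minFree c f) + s n else f i) = _
          simp only [if_neg hch]
        rwa [this] at hine
    calc _ ≤ _ := Finset.card_le_card hsub
      _ ≤ _ + 1 := Finset.card_insert_le _ _
      _ ≤ n + 1 := by omega

/-- Adding a server cannot increase the start-of-service time of any of the first
`c + 1` customers. -/
theorem startTime_anti_in_servers (c : ℕ) (a s : ℕ → ℝ) (hc : 1 ≤ c)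
    (ha0 : ∀ k, 0 ≤ a k) (hmono : Monotone a) (hs : ∀ k, 0 ≤ s k) :
    ∀ k ≤ c, startTime (c + 1) a s k ≤ startTime c a s k := by
  intro k hk
  -- among c+1 servers, after k ≤ c customers some server is still free at time 0
  have hcard : ((Finset.range (c+1)).filter
      fun i => freeTimes (c+1) a s k i ≠ 0).card < (Finset.range (c+1)).card := by
    have := card_used_le (c+1) a s k
    rw [Finset.card_range]
    omega
  obtain ⟨i, hi, hzero⟩ : ∃ i ∈ Finset.range (c+1), freeTimes (c+1) a s k i = 0 := by
    by_contra h
    push_neg at h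
    have : ((Finset.range (c+1)).filter
        fun i => freeTimes (c+1) a s k i ≠ 0) = Finset.range (c+1) := by
      apply Finset.filter_true_of_mem
      intro i hi
      exact h i hi
    rw [this] at hcard
    omega
  have h1 : minFree (c+1) (freeTimes (c+1) a s k) ≤ 0 := by
    have := minFree_le (c+1) (freeTimes (c+1) a s k) i hi
    rwa [hzero] at this
  have h2 : 0 ≤ minFree (c+1) (freeTimes (c+1) a s k) :=
    minFree_nonneg _ _ (freeTimes_nonneg (c+1) a s ha0 hs k)
  have h3 : startTime (c+1) a s k = a k := by
    unfold startTime
    rw [le_antisymm h1 h2]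
    exact max_eq_left (ha0 k)
  rw [h3]
  exact le_max_left _ _
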